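/- arXiv:2108.07441 — 2 statements merged into one kernel-verified Lean document; each statement's English description precedes it below -/
import Mathlib

section
/- There exist positive constants c₁ and c₂ such that every hyperbolic right triangle with leg lengths x and y satisfying 0 < x ≤ y ≤ 1 has area between c₁·x·y and c₂·x·y. -/
open Real Set



/-- `arctan` is 1-Lipschitz on the right. -/
lemma my_arctan_sub_le_sub {u v : ℝ} (h : v ≤ u) : arctan u - arctan v ≤ u - v := by
  have hm : Monotone (fun t : ℝ => t - arctan t) := by
    apply monotone_of_deriv_nonneg
    · exact differentiable_id.sub Real.differentiable_arctan
    · intro t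
      have hd : HasDerivAt (fun t : ℝ => t - arctan t) (1 - 1 / (1 + t ^ 2)) t :=
        (hasDerivAt_id t).sub (Real.hasDerivAt_arctan t)
      rw [hd.deriv]
      have h1 : 1 / (1 + t ^ 2) ≤ 1 := by
        rw [div_le_one (by positivity)]; nlinarith [sq_nonneg t]
      linarith
  have := hm h
  simp only at this
  linarith

lemma my_le_arctan_sub {u v : ℝ} (h0 : 0 ≤ v) (h : v ≤ u) :
    (u - v) / (1 + u ^ 2) ≤ arctan u - arctan v := by
  have hm : MonotoneOn (fun t : ℝ => arctan t - t / (1 + u ^ 2)) (Icc v u) := by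
    apply monotoneOn_of_deriv_nonneg (convex_Icc v u)
    · exact (Real.continuous_arctan.sub (continuous_id.div_const _)).continuousOn
    · intro t _
      exact (Real.differentiable_arctan.sub (differentiable_id.div_const _)).differentiableAt
        |>.differentiableWithinAt
    · intro t ht
      rw [interior_Icc, mem_Ioo] at ht
      have hd : HasDerivAt (fun t : ℝ => arctan t - t / (1 + u ^ 2))
          (1 / (1 + t ^ 2) - 1 / (1 + u ^ 2)) t :=
        (Real.hasDerivAt_arctan t).sub ((hasDerivAt_id t).div_const _)
      rw [hd.deriv, sub_nonneg]
      apply one_div_le_one_div_of_le (by positivity)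
      nlinarith [ht.1, ht.2, h0]
  have := hm (left_mem_Icc.2 h) (right_mem_Icc.2 h) h
  simp only at this
  have hv : v / (1 + u ^ 2) ≤ v := by
    rw [div_le_iff₀ (by positivity)]; nlinarith [sq_nonneg u]
  rw [sub_div]
  linarith

lemma my_cosh_one_lt_two : Real.cosh 1 < 2 := by
  rw [Real.cosh_eq]
  have h1 : Real.exp 1 < 2.7182818286 := Real.exp_one_lt_d9
  have h2 : Real.exp (-1) < 1 := Real.exp_lt_one_iff.2 (by norm_num)
  norm_num at h1 ⊢
  linarith

lemma my_sinh_le_two_mul {x : ℝ} (h0 : 0 ≤ x) (h1 : x ≤ 1) : Real.sinh x ≤ 2 * x := by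
  have hm : MonotoneOn (fun t : ℝ => 2 * t - Real.sinh t) (Icc 0 1) := by
    apply monotoneOn_of_deriv_nonneg (convex_Icc 0 1)
    · exact ((continuous_const.mul continuous_id).sub Real.continuous_sinh).continuousOn
    · intro t _
      exact ((differentiable_const (2:ℝ)|>.mul differentiable_id).sub
        Real.differentiable_sinh).differentiableAt.differentiableWithinAt
    · intro t ht
      rw [interior_Icc, mem_Ioo] at ht
      have hd : HasDerivAt (fun t : ℝ => 2 * t - Real.sinh t) (2 * 1 - Real.cosh t) t :=
        ((hasDerivAt_id t).const_mul 2).sub (Real.hasDerivAt_sinh t)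
      rw [hd.deriv]
      have : Real.cosh t ≤ Real.cosh 1 := by
        rw [Real.cosh_le_cosh]
        rw [abs_of_nonneg ht.1.le, abs_one]
        exact ht.2.le
      linarith [my_cosh_one_lt_two]
  have := hm (left_mem_Icc.2 (by norm_num)) (⟨h0, h1⟩ : x ∈ Icc (0:ℝ) 1) h0
  simp only [Real.sinh_zero] at this
  linarith

lemma my_cosh_sub_one {y : ℝ} : Real.cosh y - 1 = 2 * Real.sinh (y/2) ^ 2 := by
  have := Real.cosh_two_mul (y/2)
  rw [show 2 * (y/2) = y by ring] at this
  rw [this, Real.cosh_sq]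
  ring

lemma my_cosh_lower {y : ℝ} (h0 : 0 ≤ y) : 1 + y ^ 2 / 2 ≤ Real.cosh y := by
  have h := my_cosh_sub_one (y := y)
  have hs : y / 2 ≤ Real.sinh (y/2) := Real.self_le_sinh_iff.2 (by linarith)
  nlinarith

lemma my_cosh_upper {y : ℝ} (h0 : 0 ≤ y) (h1 : y ≤ 1) : Real.cosh y ≤ 1 + 2 * y ^ 2 := by
  have h := my_cosh_sub_one (y := y)
  have hs : Real.sinh (y/2) ≤ 2 * (y/2) := my_sinh_le_two_mul (by linarith) (by linarith)
  have hs0 : 0 ≤ Real.sinh (y/2) := Real.sinh_nonneg_iff.2 (by linarith)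
  nlinarith
set_option maxHeartbeats 1000000 in
/-- A hyperbolic right triangle with leg lengths `0 < x ≤ y ≤ 1` has area `Θ(x * y)`.
Its area is the angle defect `π/2 - α - β`, where the two non-right angles satisfy
`tan α = tanh x / sinh y` and `tan β = tanh y / sinh x`. -/
theorem hyperbolic_right_triangle_area_theta_xy :
    ∃ c₁ c₂ : ℝ, 0 < c₁ ∧ 0 < c₂ ∧ ∀ x y : ℝ, 0 < x → x ≤ y → y ≤ 1 →
      c₁ * (x * y) ≤
        π / 2 - Real.arctan (Real.tanh x / Real.sinh y)
          - Real.arctan (Real.tanh y / Real.sinh x) ∧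
      π / 2 - Real.arctan (Real.tanh x / Real.sinh y)
          - Real.arctan (Real.tanh y / Real.sinh x) ≤ c₂ * (x * y) := by
  refine ⟨1/148, 8, by norm_num, by norm_num, fun x y hx hxy hy1 => ?_⟩
  have hy : 0 < y := hx.trans_le hxy
  have hx1 : x ≤ 1 := hxy.trans hy1
  have hsx : 0 < Real.sinh x := Real.sinh_pos_iff.2 hx
  have hsy : 0 < Real.sinh y := Real.sinh_pos_iff.2 hy
  have hcx : 0 < Real.cosh x := Real.cosh_pos x
  have hcy : 0 < Real.cosh y := Real.cosh_pos y
  have htx : Real.tanh x = Real.sinh x / Real.cosh x := Real.tanh_eq_sinh_div_cosh x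
  have hty : Real.tanh y = Real.sinh y / Real.cosh y := Real.tanh_eq_sinh_div_cosh y
  have htypos : 0 < Real.tanh y / Real.sinh x := by
    rw [hty]; positivity
  set u : ℝ := Real.sinh x * Real.cosh y / Real.sinh y with hu_def
  set v : ℝ := Real.tanh x / Real.sinh y with hv_def
  have hinv : (Real.tanh y / Real.sinh x)⁻¹ = u := by
    rw [hu_def, hty]
    field_simp
  have harea : π / 2 - Real.arctan (Real.tanh x / Real.sinh y)
      - Real.arctan (Real.tanh y / Real.sinh x) = Real.arctan u - Real.arctan v := by
    have h := Real.arctan_inv_of_pos htypos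
    rw [hinv] at h
    rw [h]
    ring
  -- basic numeric bounds
  have hsx_le : Real.sinh x ≤ 2 * x := my_sinh_le_two_mul hx.le hx1
  have hsy_le : Real.sinh y ≤ 2 * y := my_sinh_le_two_mul hy.le hy1
  have hx_le : x ≤ Real.sinh x := Real.self_le_sinh_iff.2 hx.le
  have hy_le : y ≤ Real.sinh y := Real.self_le_sinh_iff.2 hy.le
  have hcy_lo : 1 + y ^ 2 / 2 ≤ Real.cosh y := my_cosh_lower hy.le
  have hcy_hi : Real.cosh y ≤ 1 + 2 * y ^ 2 := my_cosh_upper hy.le hy1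
  have hcx_hi : Real.cosh x ≤ 1 + 2 * x ^ 2 := my_cosh_upper hx.le hx1
  have hcx1 : 1 ≤ Real.cosh x := Real.one_le_cosh x
  have hcy1 : 1 ≤ Real.cosh y := Real.one_le_cosh y
  have httx : Real.tanh x * Real.cosh x = Real.sinh x := by
    rw [htx]; field_simp
  have htx0 : 0 ≤ Real.tanh x := by rw [htx]; positivity
  have htx_le : Real.tanh x ≤ Real.sinh x := by nlinarith
  have hv0 : 0 ≤ v := by rw [hv_def]; positivity
  have hsub : u - v = (Real.sinh x * Real.cosh y - Real.tanh x) / Real.sinh y := by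
    rw [hu_def, hv_def, div_sub_div_same]
  -- lower bound on u - v
  have hlow : x * y / 4 ≤ u - v := by
    rw [hsub, le_div_iff₀ hsy]
    have p1 : Real.sinh x * (1 + y ^ 2 / 2) ≤ Real.sinh x * Real.cosh y :=
      mul_le_mul_of_nonneg_left hcy_lo hsx.le
    have p2 : x * y ^ 2 ≤ Real.sinh x * y ^ 2 :=
      mul_le_mul_of_nonneg_right hx_le (sq_nonneg y)
    have p3 : x * y * Real.sinh y ≤ x * y * (2 * y) :=
      mul_le_mul_of_nonneg_left hsy_le (by positivity)
    nlinarith [p1, p2, p3]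
  have hvu : v ≤ u := by nlinarith [hlow, mul_pos hx hy]
  -- upper bound on u - v
  have hhigh : u - v ≤ 8 * (x * y) := by
    rw [hsub, div_le_iff₀ hsy]
    have hid : Real.tanh x * (Real.cosh x - 1) = Real.sinh x - Real.tanh x := by
      rw [mul_sub, mul_one, httx]
    have hid2 : Real.sinh x * (Real.cosh y - 1) = Real.sinh x * Real.cosh y - Real.sinh x := by
      ring
    have p1 : Real.sinh x * (Real.cosh y - 1) ≤ 2 * x * (2 * y ^ 2) :=
      mul_le_mul hsx_le (by linarith) (by linarith) (by positivity)
    have p2 : Real.tanh x * (Real.cosh x - 1) ≤ 2 * x * (2 * x ^ 2) :=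
      mul_le_mul (htx_le.trans hsx_le) (by linarith) (by linarith) (by positivity)
    have p3 : x * x ^ 2 ≤ x * y ^ 2 :=
      mul_le_mul_of_nonneg_left (by nlinarith) hx.le
    have p4 : 8 * (x * y) * y ≤ 8 * (x * y) * Real.sinh y :=
      mul_le_mul_of_nonneg_left hy_le (by positivity)
    nlinarith [p1, p2, p3, p4, hid, hid2]
  -- u ≤ 6
  have hu6 : u ≤ 6 := by
    rw [hu_def, div_le_iff₀ hsy]
    have p1 : Real.sinh x * Real.cosh y ≤ 2 * x * 3 :=
      mul_le_mul hsx_le (by nlinarith) hcy.le (by positivity)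
    linarith
  have hu0 : 0 ≤ u := hv0.trans hvu
  constructor
  · rw [harea]
    have h1 : (u - v) / (1 + u ^ 2) ≤ Real.arctan u - Real.arctan v :=
      my_le_arctan_sub hv0 hvu
    have h2 : (x * y / 4) / 37 ≤ (u - v) / (1 + u ^ 2) := by
      apply div_le_div₀ (by linarith) hlow (by positivity)
      nlinarith
    calc (1/148 : ℝ) * (x * y) = (x * y / 4) / 37 := by ring
    _ ≤ (u - v) / (1 + u ^ 2) := h2
    _ ≤ _ := h1
  · rw [harea]
    have h1 : Real.arctan u - Real.arctan v ≤ u - v := my_arctan_sub_le_sub hvu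
    linarith
end

section
/- Divide the hyperbolic plane into four quadrants by two perpendicular geodesic lines crossing at a point x. Then every geodesic segment from a point in one quadrant to a point in the opposite (nonadjacent) quadrant passes within hyperbolic distance ln(1+√2) of x. -/
open Real MeasureTheory ENNReal
open scoped RealInnerProductSpace

noncomputable section

/-- The plane, used as the underlying set of the Beltrami--Klein disk model
(points of the model are those of Euclidean norm `< 1`). -/
abbrev E2 := EuclideanSpace ℝ (Fin 2)

/-- Inverse hyperbolic cosine. -/
noncomputable def arcosh (x : ℝ) : ℝ := Real.log (x + Real.sqrt (x ^ 2 - 1))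

/-- Hyperbolic distance in the Beltrami--Klein disk model. -/
noncomputable def kDist (p q : E2) : ℝ :=
  _root_.arcosh ((1 - ⟪p, q⟫) / Real.sqrt ((1 - ‖p‖ ^ 2) * (1 - ‖q‖ ^ 2)))

/-- Hyperbolic area of a subset of the Klein disk. -/
noncomputable def kArea (s : Set E2) : ℝ≥0∞ :=
  ∫⁻ p in s, ENNReal.ofReal ((1 - ‖p‖ ^ 2) ^ (-(3 : ℝ) / 2))

/-- The hyperbolic angle at `v` between the geodesic segments from `v` to `u` and
from `v` to `w`, computed via the hyperbolic law of cosines. -/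
noncomputable def kAngle (v u w : E2) : ℝ :=
  Real.arccos ((Real.cosh (kDist v u) * Real.cosh (kDist v w) - Real.cosh (kDist u w)) /
    (Real.sinh (kDist v u) * Real.sinh (kDist v w)))

/-- Hyperbolic distance from a point `v` to the hyperbolic line through `p` and `q`
(a Euclidean line in the Klein model, intersected with the unit disk). -/
noncomputable def kLineDist (v p q : E2) : ℝ :=
  sInf (kDist v '' ((affineSpan ℝ ({p, q} : Set E2) : Set E2) ∩ Metric.ball (0 : E2) 1))

/-- Hyperbolic distance from a point `v` to the geodesic segment from `p` to `q`. -/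
noncomputable def kSegDist (v p q : E2) : ℝ :=
  sInf (kDist v '' segment ℝ p q)

/-- The height of the hyperbolic triangle `a b c` : the minimum over the vertices of
the distance from a vertex to the line of the opposite side. -/
noncomputable def kHeight (a b c : E2) : ℝ :=
  min (kLineDist a b c) (min (kLineDist b a c) (kLineDist c a b))

/-- The hyperbolic triangle with the given vertices: in the Klein model geodesics are
Euclidean segments, so it is the Euclidean convex hull. -/
noncomputable def kTriangle (a b c : E2) : Set E2 := convexHull ℝ ({a, b, c} : Set E2)

/-! In the Klein model geodesics are Euclidean chords. The chord from `p` to `q` crosses the two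
axes at points `a` and `b` with `a ⟂ b` and `‖a‖, ‖b‖ < 1`, so `midpoint a b` has
Euclidean norm below `1/√2`; and a point at Euclidean norm `r` from the center is at hyperbolic
distance `arcosh (1 / √(1 - r²)) ≤ arcosh √2 = ln (1 + √2)` from it. -/

lemma kDist_zero_right (z : E2) : kDist z 0 = Real.arcosh (1 / Real.sqrt (1 - ‖z‖ ^ 2)) := by
  simp [kDist, _root_.arcosh, Real.arcosh]

lemma kDist_zero_right_le_of_sq_norm_le {z : E2} (hz : ‖z‖ ^ 2 ≤ 1 / 2) :
    kDist z 0 ≤ Real.log (1 + Real.sqrt 2) := by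
  have hpos : 0 < Real.sqrt (1 - ‖z‖ ^ 2) := Real.sqrt_pos.2 (by linarith)
  have harcosh : Real.arcosh (Real.sqrt 2) = Real.log (1 + Real.sqrt 2) := by
    rw [Real.arcosh, Real.sq_sqrt zero_le_two]
    norm_num [add_comm]
  rw [kDist_zero_right, ← harcosh,
    Real.arcosh_le_arcosh (one_div_pos.2 hpos) (Real.sqrt_pos.2 two_pos), div_le_iff₀ hpos,
    ← Real.sqrt_mul zero_le_two, Real.one_le_sqrt]
  linarith

lemma sq_norm_midpoint_lt_half {F : Type*} [NormedAddCommGroup F] [InnerProductSpace ℝ F]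
    {a b : F} (hab : ⟪a, b⟫ = 0) (ha : ‖a‖ < 1) (hb : ‖b‖ < 1) :
    ‖midpoint ℝ a b‖ ^ 2 < 1 / 2 := by
  rw [midpoint_eq_smul_add, norm_smul, mul_pow, norm_add_sq_real, hab]
  have ha2 : ‖a‖ ^ 2 < 1 := by nlinarith [norm_nonneg a]
  have hb2 : ‖b‖ ^ 2 < 1 := by nlinarith [norm_nonneg b]
  norm_num
  linarith

lemma exists_mem_segment_eq_zero {E : Type*} [AddCommGroup E] [Module ℝ E] [TopologicalSpace E]
    [IsTopologicalAddGroup E] [ContinuousSMul ℝ E] {f : E → ℝ} (hf : Continuous f) {p q : E}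
    (hp : 0 ≤ f p) (hq : f q ≤ 0) : ∃ z ∈ segment ℝ p q, f z = 0 := by
  rw [segment_symm]
  exact (convex_segment q p).isPreconnected.intermediate_value (left_mem_segment ℝ q p)
    (right_mem_segment ℝ q p) hf.continuousOn ⟨hq, hp⟩

/-- In the Klein disk model we may take `x` to be the center of the disk and the two
perpendicular geodesics to be the coordinate axes, the quadrants being given by the signs of
the coordinates. -/
theorem opposite_quadrants_segment_near_center (p q : E2)
    (hp : ‖p‖ < 1) (hq : ‖q‖ < 1)
    (hp0 : 0 < p 0) (hp1 : 0 < p 1) (hq0 : q 0 < 0) (hq1 : q 1 < 0) :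
    ∃ z ∈ segment ℝ p q, kDist z 0 ≤ Real.log (1 + Real.sqrt 2) := by
  obtain ⟨a, haseg, ha⟩ :=
    exists_mem_segment_eq_zero (f := fun z : E2 ↦ z 1) (by fun_prop) hp1.le hq1.le
  obtain ⟨b, hbseg, hb⟩ :=
    exists_mem_segment_eq_zero (f := fun z : E2 ↦ z 0) (by fun_prop) hp0.le hq0.le
  have hab : ⟪a, b⟫ = 0 := by simp [PiLp.inner_apply, Fin.sum_univ_two, ha, hb]
  have hball : segment ℝ p q ⊆ Metric.ball 0 1 :=
    (convex_ball 0 1).segment_subset (mem_ball_zero_iff.2 hp) (mem_ball_zero_iff.2 hq)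
  refine ⟨midpoint ℝ a b, (convex_segment p q).midpoint_mem haseg hbseg,
    kDist_zero_right_le_of_sq_norm_le (sq_norm_midpoint_lt_half hab ?_ ?_).le⟩
  · exact mem_ball_zero_iff.1 (hball haseg)
  · exact mem_ball_zero_iff.1 (hball hbseg)

end
end
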